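/- arXiv:1703.10565 — 6 statements merged into one kernel-verified Lean document; each statement's English description precedes it below -/
import Mathlib

section
/- For a finite set of intervals on the real line, the greedy coloring algorithm that processes intervals sorted by their left endpoints and assigns to each interval the smallest color not used by any already-colored intersecting interval uses exactly ω colors, where ω is the maximum number of pairwise intersecting intervals (the clique number of the interval graph). -/
/-- **Greedy coloring of interval graphs is optimal.**
A finite family of closed intervals `[a j, b j]` sorted by left endpoints is colored
greedily: the color `g j` of interval `j` is the least color not used by any
already-colored (i.e. earlier) interval intersecting it.  Then `g` is a proper
coloring of the interval graph and the number of colors used equals the clique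
number, i.e. the maximum number of pairwise intersecting intervals. -/
theorem greedy_interval_coloring_uses_clique_number_colors
    (m : ℕ) (a b : Fin m → ℝ) (hab : ∀ j, a j ≤ b j)
    (hsorted : Monotone a)
    (g : Fin m → ℕ)
    (hgreedy : ∀ j : Fin m,
      IsLeast {c : ℕ | ∀ k : Fin m, k < j →
        max (a j) (a k) ≤ min (b j) (b k) → g k ≠ c} (g j)) :
    (∀ j k : Fin m, j ≠ k → max (a j) (a k) ≤ min (b j) (b k) → g j ≠ g k) ∧
    (Finset.univ.image g).card =
      sSup {w : ℕ | ∃ S : Finset (Fin m), S.card = w ∧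
        ∀ j ∈ S, ∀ k ∈ S, max (a j) (a k) ≤ min (b j) (b k)} := by
  have hproper : ∀ j k : Fin m, j ≠ k → max (a j) (a k) ≤ min (b j) (b k) → g j ≠ g k := by
    intro j k hjk hint
    rcases lt_or_gt_of_ne hjk with h | h
    · exact (hgreedy k).1 j h (by rwa [max_comm, min_comm])
    · exact ((hgreedy j).1 k h hint).symm
  refine ⟨hproper, ?_⟩
  set W := {w : ℕ | ∃ S : Finset (Fin m), S.card = w ∧
      ∀ j ∈ S, ∀ k ∈ S, max (a j) (a k) ≤ min (b j) (b k)} with hWdef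
  have hW0 : (0 : ℕ) ∈ W := ⟨∅, by simp⟩
  have hWbdd : BddAbove W := by
    refine ⟨m, ?_⟩
    rintro w ⟨S, hS, -⟩
    simpa [← hS] using (Finset.card_le_univ S)
  have hle : ∀ w ∈ W, w ≤ (Finset.univ.image g).card := by
    rintro w ⟨S, hScard, hSclique⟩
    have hinj : Set.InjOn g S := by
      intro j hj k hk hjk'
      by_contra hne
      exact hproper j k hne (hSclique j hj k hk) hjk'
    calc w = S.card := hScard.symm
      _ = (S.image g).card := (Finset.card_image_of_injOn hinj).symm
      _ ≤ (Finset.univ.image g).card :=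
          Finset.card_le_card (Finset.image_subset_image (Finset.subset_univ S))
  have h3 : sSup W ≤ (Finset.univ.image g).card := csSup_le ⟨0, hW0⟩ hle
  rcases Nat.eq_zero_or_pos m with hm | hm
  · subst hm
    have : (Finset.univ.image g).card = 0 := by simp [Finset.card_eq_zero]
    omega
  · have : Nonempty (Fin m) := ⟨⟨0, hm⟩⟩
    obtain ⟨j0, -, hj0⟩ := Finset.exists_max_image (Finset.univ : Finset (Fin m)) g
      ⟨Classical.arbitrary (Fin m), Finset.mem_univ _⟩
    have hj0' : ∀ k : Fin m, g k ≤ g j0 := fun k => hj0 k (Finset.mem_univ k)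
    -- build a clique of size g j0 + 1
    have hex : ∀ i : Fin (g j0), ∃ k : Fin m, k < j0 ∧
        max (a j0) (a k) ≤ min (b j0) (b k) ∧ g k = (i : ℕ) := by
      intro i
      by_contra hcon
      push_neg at hcon
      have hmem : (i : ℕ) ∈ {c : ℕ | ∀ k : Fin m, k < j0 →
          max (a j0) (a k) ≤ min (b j0) (b k) → g k ≠ c} := by
        intro k hk hint
        exact hcon k hk hint
      have := (hgreedy j0).2 hmem
      omega
    choose f hf1 hf2 hf3 using hex
    have hfinjective : Function.Injective f := by
      intro i1 i2 h12
      have : (i1 : ℕ) = (i2 : ℕ) := by rw [← hf3 i1, ← hf3 i2, h12]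
      exact Fin.ext this
    set S : Finset (Fin m) := insert j0 (Finset.univ.image f) with hSdef
    have hj0notin : j0 ∉ Finset.univ.image f := by
      simp only [Finset.mem_image, Finset.mem_univ, true_and]
      rintro ⟨i, hi⟩
      have := hf3 i
      rw [hi] at this
      omega
    have hScard : S.card = g j0 + 1 := by
      rw [hSdef, Finset.card_insert_of_notMem hj0notin,
        Finset.card_image_of_injective _ hfinjective]
      simp
    have hpt : ∀ k ∈ S, a k ≤ a j0 ∧ a j0 ≤ b k := by
      intro k hk
      rw [hSdef, Finset.mem_insert] at hk
      rcases hk with rfl | hk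
      · exact ⟨le_refl _, hab _⟩
      · simp only [Finset.mem_image, Finset.mem_univ, true_and] at hk
        obtain ⟨i, rfl⟩ := hk
        refine ⟨hsorted (hf1 i).le, ?_⟩
        exact le_trans (le_max_left _ _) ((hf2 i).trans (min_le_right _ _))
    have hSclique : (g j0 + 1) ∈ W := by
      refine ⟨S, hScard, ?_⟩
      intro j hj k hk
      obtain ⟨hj1, hj2⟩ := hpt j hj
      obtain ⟨hk1, hk2⟩ := hpt k hk
      exact le_trans (max_le hj1 hk1) (le_min hj2 hk2)
    have h2 : g j0 + 1 ≤ sSup W := le_csSup hWbdd hSclique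
    have h1 : (Finset.univ.image g).card ≤ g j0 + 1 := by
      have hsub : Finset.univ.image g ⊆ Finset.range (g j0 + 1) := by
        intro c hc
        simp only [Finset.mem_image, Finset.mem_univ, true_and] at hc
        obtain ⟨k, rfl⟩ := hc
        simp only [Finset.mem_range, Nat.lt_succ_iff]
        exact hj0' k
      simpa using Finset.card_le_card hsub
    omega
end

section
/- For a finite family of closed intervals on the real line, the maximum number of pairwise intersecting intervals equals the maximum over points p of the number of intervals containing p; in particular the chromatic number of the interval graph equals this pointwise maximum load. -/
open Classical in
noncomputable def greedy {m : ℕ} (L : ℕ) (hL : 0 < L) (N : Fin m → Finset (Fin m)) :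
    Fin m → Fin L
  | k =>
    let used : Finset (Fin L) :=
      (((N k).filter (fun x => x.val < k.val)).attach).image
        (fun x => greedy L hL N x.1)
    if h : (Finset.univ \ used).Nonempty then h.choose else ⟨0, hL⟩
  termination_by k => (k : ℕ)
  decreasing_by exact (Finset.mem_filter.mp x.2).2

theorem greedy_spec {m : ℕ} (L : ℕ) (hL : 0 < L) (N : Fin m → Finset (Fin m)) (k : Fin m)
    (hcard : ((N k).filter (fun x => x.val < k.val)).card < L) :
    ∀ k' ∈ N k, k'.val < k.val → greedy L hL N k' ≠ greedy L hL N k := by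
  intro k' hk' hlt
  have hmem : k' ∈ (N k).filter (fun x => x.val < k.val) :=
    Finset.mem_filter.mpr ⟨hk', hlt⟩
  set used : Finset (Fin L) :=
    (((N k).filter (fun x => x.val < k.val)).attach).image
      (fun x => greedy L hL N x.1) with hused
  have hne : (Finset.univ \ used).Nonempty := by
    apply Finset.sdiff_nonempty.mpr
    intro hsub
    have h1 : used.card ≤ ((N k).filter (fun x => x.val < k.val)).card := by
      simpa using Finset.card_image_le (s := ((N k).filter (fun x => x.val < k.val)).attach)
        (f := fun x => greedy L hL N x.1)
    have h2 : (Finset.univ : Finset (Fin L)).card ≤ used.card := Finset.card_le_card hsub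
    simp [Finset.card_univ] at h2
    omega
  have hk : greedy L hL N k = hne.choose := by
    rw [greedy]
    simp only [← hused]
    rw [dif_pos hne]
  have hspec := hne.choose_spec
  rw [Finset.mem_sdiff] at hspec
  intro hcontra
  apply hspec.2
  rw [← hk, ← hcontra]
  exact Finset.mem_image.mpr ⟨⟨k', hmem⟩, Finset.mem_attach _ _, rfl⟩

/-- **Helly property for intervals / clique number = maximum point load = chromatic number.**
For a finite family of closed intervals `[a i, b i]` on the real line, the maximum
number of pairwise intersecting intervals equals the maximum over points `p : ℝ` of
the number of intervals containing `p`, and the chromatic number of the interval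
graph (minimum number of colors of a proper coloring) also equals this pointwise
maximum load. -/
theorem interval_clique_eq_pointLoad_eq_chromatic
    (m : ℕ) (a b : Fin m → ℝ) (hab : ∀ i, a i ≤ b i) :
    sSup {w : ℕ | ∃ S : Finset (Fin m), S.card = w ∧
        ∀ i ∈ S, ∀ j ∈ S, max (a i) (a j) ≤ min (b i) (b j)} =
      sSup {w : ℕ | ∃ p : ℝ,
        w = (Finset.univ.filter (fun i : Fin m => a i ≤ p ∧ p ≤ b i)).card} ∧
    sInf {k : ℕ | ∃ g : Fin m → Fin k, ∀ i j : Fin m, i ≠ j →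
        max (a i) (a j) ≤ min (b i) (b j) → g i ≠ g j} =
      sSup {w : ℕ | ∃ p : ℝ,
        w = (Finset.univ.filter (fun i : Fin m => a i ≤ p ∧ p ≤ b i)).card} := by
  classical
  set F : ℝ → Finset (Fin m) :=
    fun p => Finset.univ.filter (fun i : Fin m => a i ≤ p ∧ p ≤ b i) with hF
  set PL : Set ℕ := {w : ℕ | ∃ p : ℝ, w = (F p).card} with hPL
  set L : ℕ := sSup PL with hLdef
  have hPLne : PL.Nonempty := ⟨(F 0).card, 0, rfl⟩
  have hPLbdd : BddAbove PL := by
    refine ⟨m, fun w hw => ?_⟩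
    obtain ⟨p, rfl⟩ := hw
    calc (F p).card ≤ (Finset.univ : Finset (Fin m)).card := Finset.card_filter_le _ _
      _ = m := by simp
  have hFle : ∀ p : ℝ, (F p).card ≤ L := fun p => le_csSup hPLbdd ⟨p, rfl⟩
  set CS : Set ℕ := {w : ℕ | ∃ S : Finset (Fin m), S.card = w ∧
      ∀ i ∈ S, ∀ j ∈ S, max (a i) (a j) ≤ min (b i) (b j)} with hCS
  have hCSbdd : BddAbove CS := by
    refine ⟨m, fun w hw => ?_⟩
    obtain ⟨S, rfl, -⟩ := hw
    simpa using Finset.card_le_card (Finset.subset_univ S)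
  constructor
  · apply le_antisymm
    · refine csSup_le ⟨0, ∅, by simp⟩ ?_
      rintro w ⟨S, rfl, hS⟩
      rcases S.eq_empty_or_nonempty with rfl | hSne
      · simp
      obtain ⟨i0, hi0, hmax⟩ := S.exists_max_image a hSne
      refine le_trans (Finset.card_le_card ?_) (hFle (a i0))
      intro j hj
      refine Finset.mem_filter.mpr ⟨Finset.mem_univ _, hmax j hj, ?_⟩
      calc a i0 ≤ max (a i0) (a j) := le_max_left _ _
        _ ≤ min (b i0) (b j) := hS i0 hi0 j hj
        _ ≤ b j := min_le_right _ _
    · refine csSup_le hPLne ?_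
      rintro w ⟨p, rfl⟩
      refine le_csSup hCSbdd ⟨F p, rfl, ?_⟩
      intro i hi j hj
      rw [Finset.mem_filter] at hi hj
      exact le_trans (max_le hi.2.1 hj.2.1) (le_min hi.2.2 hj.2.2)
  · set ChS : Set ℕ := {k : ℕ | ∃ g : Fin m → Fin k, ∀ i j : Fin m, i ≠ j →
        max (a i) (a j) ≤ min (b i) (b j) → g i ≠ g j} with hChS
    have hmMem : m ∈ ChS := ⟨id, fun i j hij _ => hij⟩
    apply le_antisymm
    · -- sInf ChS ≤ L : greedy coloring
      rcases Nat.eq_zero_or_pos m with rfl | hm0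
      · refine le_trans (Nat.sInf_le ?_) (Nat.zero_le _)
        exact ⟨Fin.elim0, fun i => i.elim0⟩
      have hL : 0 < L := by
        have h1 : 1 ≤ (F (a ⟨0, hm0⟩)).card := by
          refine Finset.card_pos.mpr ⟨⟨0, hm0⟩, ?_⟩
          exact Finset.mem_filter.mpr ⟨Finset.mem_univ _, le_refl _, hab _⟩
        exact lt_of_lt_of_le h1 (hFle _)
      set σ : Equiv.Perm (Fin m) := Tuple.sort a with hσ
      have hmono : Monotone (a ∘ σ) := Tuple.monotone_sort a
      set N : Fin m → Finset (Fin m) := fun k =>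
        Finset.univ.filter (fun k' =>
          max (a (σ k')) (a (σ k)) ≤ min (b (σ k')) (b (σ k))) with hN
      have hcard : ∀ k : Fin m, ((N k).filter (fun x => x.val < k.val)).card < L := by
        intro k
        set T := (N k).filter (fun x => x.val < k.val) with hT
        have hknotinT : k ∉ T := fun h => by
          have := (Finset.mem_filter.mp h).2; omega
        have hsub : (insert k T).image σ ⊆ F (a (σ k)) := by
          intro j hj
          rw [Finset.mem_image] at hj
          obtain ⟨k', hk', rfl⟩ := hj
          rcases Finset.mem_insert.mp hk' with rfl | hk'T
          · exact Finset.mem_filter.mpr ⟨Finset.mem_univ _, le_refl _, hab _⟩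
          · rw [hT, Finset.mem_filter, hN, Finset.mem_filter] at hk'T
            refine Finset.mem_filter.mpr ⟨Finset.mem_univ _, ?_, ?_⟩
            · exact hmono (le_of_lt hk'T.2)
            · calc a (σ k) ≤ max (a (σ k')) (a (σ k)) := le_max_right _ _
                _ ≤ min (b (σ k')) (b (σ k)) := hk'T.1.2
                _ ≤ b (σ k') := min_le_left _ _
        have hcard1 : T.card + 1 ≤ (F (a (σ k))).card := by
          have := Finset.card_le_card hsub
          rwa [Finset.card_image_of_injective _ σ.injective,
            Finset.card_insert_of_notMem hknotinT] at this
        have := hFle (a (σ k))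
        omega
      refine Nat.sInf_le ⟨fun i => greedy L hL N (σ.symm i), ?_⟩
      intro i j hij hint
      have hNsymm : ∀ u v : Fin m, σ.symm u ∈ N (σ.symm v) ↔
          max (a u) (a v) ≤ min (b u) (b v) := by
        intro u v
        rw [hN, Finset.mem_filter]
        simp [Equiv.apply_symm_apply]
      have hne : (σ.symm i).val ≠ (σ.symm j).val := by
        intro h
        exact hij (σ.symm.injective (Fin.val_injective h))
      rcases lt_or_gt_of_ne hne with hlt | hgt
      · have hmem : σ.symm i ∈ N (σ.symm j) := (hNsymm i j).mpr hint
        exact greedy_spec L hL N (σ.symm j) (hcard _) (σ.symm i) hmem hlt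
      · have hmem : σ.symm j ∈ N (σ.symm i) := (hNsymm j i).mpr
          (by rw [max_comm, min_comm]; exact hint)
        exact (greedy_spec L hL N (σ.symm i) (hcard _) (σ.symm j) hmem hgt).symm
    · -- L ≤ sInf ChS
      have hmem := Nat.sInf_mem (⟨m, hmMem⟩ : ChS.Nonempty)
      obtain ⟨g, hg⟩ := hmem
      refine csSup_le hPLne ?_
      rintro w ⟨p, rfl⟩
      have hinj : Set.InjOn g (F p) := by
        intro i hi j hj hgij
        by_contra hij
        rw [hF, Finset.mem_coe, Finset.mem_filter] at hi hj
        exact hg i j hij (le_trans (max_le hi.2.1 hj.2.1) (le_min hi.2.2 hj.2.2)) hgij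
      calc (F p).card ≤ (Finset.univ : Finset (Fin (sInf ChS))).card :=
            Finset.card_le_card_of_injOn g (fun _ _ => Finset.mem_univ _) hinj
        _ = sInf ChS := by simp
end

section
/- Let C be a circuit of length |C| with edges e_1,…,e_n, and let σ be a finite multiset of unit requests, each request being a subpath of C not containing the origin in its interior. Let ω = max over edges e of the number of requests whose subpath contains e. Then any feasible transportation schedule for a vehicle of capacity Cap, in which every request is served by a full traversal-subtour of C and at most Cap requests share any edge within a subtour, has total tour length at least ⌈ω/Cap⌉·|C|, and there exists a schedule achieving total tour length exactly ⌈ω/Cap⌉·|C|. -/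
private lemma tram_aux (n m K Cap : ℕ) (hCap : 0 < Cap) (hK : 0 < K)
    (lo hi : Fin m → Fin n) (hlh : ∀ j, lo j ≤ hi j)
    (hbound : ∀ e : Fin n,
      (Finset.univ.filter (fun j => lo j ≤ e ∧ e ≤ hi j)).card ≤ K * Cap)
    (s : Finset (Fin m)) :
    ∃ f : Fin m → Fin K, ∀ (t : Fin K) (e : Fin n),
      (s.filter (fun j => f j = t ∧ lo j ≤ e ∧ e ≤ hi j)).card ≤ Cap := by
  induction s using Finset.strongInduction with
  | _ s ih =>
    rcases s.eq_empty_or_nonempty with rfl | hs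
    · exact ⟨fun _ => ⟨0, hK⟩, fun t e => by simp⟩
    · obtain ⟨j0, hj0s, hj0max⟩ := s.exists_max_image lo hs
      obtain ⟨f', hf'⟩ := ih (s.erase j0) (s.erase_ssubset hj0s)
      have hcover : j0 ∈ Finset.univ.filter (fun j => lo j ≤ lo j0 ∧ lo j0 ≤ hi j) := by
        simp [hlh j0]
      have hkey : ∃ t0 : Fin K,
          ((s.erase j0).filter (fun j => f' j = t0 ∧ lo j ≤ lo j0 ∧ lo j0 ≤ hi j)).card
            < Cap := by
        by_contra h
        push_neg at h
        have hsum : ((s.erase j0).filter (fun j => lo j ≤ lo j0 ∧ lo j0 ≤ hi j)).card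
            = ∑ t : Fin K, ((s.erase j0).filter
              (fun j => f' j = t ∧ lo j ≤ lo j0 ∧ lo j0 ≤ hi j)).card := by
          rw [Finset.card_eq_sum_card_fiberwise
            (f := f') (t := Finset.univ) (fun x _ => Finset.mem_univ _)]
          refine Finset.sum_congr rfl (fun t _ => ?_)
          rw [Finset.filter_filter]
          congr 1
          ext j
          simp only [Finset.mem_filter]
          tauto
        have hle : K * Cap ≤ ((s.erase j0).filter
            (fun j => lo j ≤ lo j0 ∧ lo j0 ≤ hi j)).card := by
          rw [hsum]
          calc K * Cap = ∑ _t : Fin K, Cap := by simp [mul_comm]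
          _ ≤ _ := Finset.sum_le_sum (fun t _ => h t)
        have hsub : (s.erase j0).filter (fun j => lo j ≤ lo j0 ∧ lo j0 ≤ hi j)
            ⊆ (Finset.univ.filter (fun j => lo j ≤ lo j0 ∧ lo j0 ≤ hi j)).erase j0 := by
          intro j hj
          simp only [Finset.mem_filter, Finset.mem_erase] at hj ⊢
          exact ⟨hj.1.1, Finset.mem_univ _, hj.2⟩
        have hlt : ((s.erase j0).filter (fun j => lo j ≤ lo j0 ∧ lo j0 ≤ hi j)).card
            < K * Cap := by
          calc _ ≤ ((Finset.univ.filter (fun j => lo j ≤ lo j0 ∧ lo j0 ≤ hi j)).erase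
                j0).card := Finset.card_le_card hsub
          _ < (Finset.univ.filter (fun j => lo j ≤ lo j0 ∧ lo j0 ≤ hi j)).card :=
                Finset.card_erase_lt_of_mem hcover
          _ ≤ K * Cap := hbound _
        omega
      obtain ⟨t0, ht0⟩ := hkey
      refine ⟨Function.update f' j0 t0, fun t e => ?_⟩
      have hins : s = insert j0 (s.erase j0) := (Finset.insert_erase hj0s).symm
      by_cases hc : t0 = t ∧ lo j0 ≤ e ∧ e ≤ hi j0
      · -- j0 participates
        rw [hins, Finset.filter_insert,
          if_pos (show Function.update f' j0 t0 j0 = t ∧ lo j0 ≤ e ∧ e ≤ hi j0 from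
            ⟨by rw [Function.update_self]; exact hc.1, hc.2⟩)]
        have hnotmem : j0 ∉ (s.erase j0).filter
            (fun j => Function.update f' j0 t0 j = t ∧ lo j ≤ e ∧ e ≤ hi j) :=
          fun h => (Finset.mem_erase.mp (Finset.mem_of_mem_filter _ h)).1 rfl
        rw [Finset.card_insert_of_notMem hnotmem]
        have hsub : (s.erase j0).filter
            (fun j => Function.update f' j0 t0 j = t ∧ lo j ≤ e ∧ e ≤ hi j)
            ⊆ (s.erase j0).filter (fun j => f' j = t0 ∧ lo j ≤ lo j0 ∧ lo j0 ≤ hi j) := by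
          intro j hj
          simp only [Finset.mem_filter, Finset.mem_erase] at hj ⊢
          obtain ⟨⟨hjne, hjs⟩, hft, hloj, hhij⟩ := hj
          rw [Function.update_of_ne hjne] at hft
          exact ⟨⟨hjne, hjs⟩, hft.trans hc.1.symm, hj0max j hjs, le_trans hc.2.1 hhij⟩
        have := Finset.card_le_card hsub
        omega
      · -- j0 does not participate in this (t, e)
        have hnc : ¬(Function.update f' j0 t0 j0 = t ∧ lo j0 ≤ e ∧ e ≤ hi j0) := by
          rw [Function.update_self]; exact hc
        have heq : (s.erase j0).filter
            (fun j => Function.update f' j0 t0 j = t ∧ lo j ≤ e ∧ e ≤ hi j)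
            = (s.erase j0).filter (fun j => f' j = t ∧ lo j ≤ e ∧ e ≤ hi j) := by
          apply Finset.filter_congr
          intro j hj
          rw [Function.update_of_ne (Finset.mem_erase.mp hj).1]
        rw [hins, Finset.filter_insert, if_neg hnc, heq]
        exact hf' t e

/-- **Offline optimum for the tram mode on a circuit.**
The circuit `C` (cut open at the origin) has `n` edges and total length `CLen`.
Requests are unit requests given as subpaths, i.e. edge intervals `[lo j, hi j]`.
`ω` is the maximum, over edges `e`, of the number of requests covering `e`.
A feasible schedule assigns every request to one of `k` full traversal-subtours
(`f : Fin m → Fin k`) such that within each subtour at most `Cap` requests cover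
any edge; its total tour length is `k * CLen`.  Every feasible schedule has total
tour length at least `⌈ω/Cap⌉ * CLen`, and some feasible schedule achieves exactly
`⌈ω/Cap⌉` subtours (hence total tour length `⌈ω/Cap⌉ * CLen`). -/
theorem tram_offline_optimum_circuit
    (n m Cap CLen : ℕ) (hn : 0 < n) (hCap : 0 < Cap) (hC : 0 < CLen)
    (lo hi : Fin m → Fin n) (hlh : ∀ j, lo j ≤ hi j)
    (ω : ℕ)
    (hω : IsGreatest {w : ℕ | ∃ e : Fin n,
        w = (Finset.univ.filter (fun j => lo j ≤ e ∧ e ≤ hi j)).card} ω) :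
    (∀ (k : ℕ) (f : Fin m → Fin k),
        (∀ (t : Fin k) (e : Fin n),
          (Finset.univ.filter (fun j => f j = t ∧ lo j ≤ e ∧ e ≤ hi j)).card ≤ Cap) →
        ((ω + Cap - 1) / Cap) * CLen ≤ k * CLen) ∧
    (∃ f : Fin m → Fin ((ω + Cap - 1) / Cap),
        ∀ (t : Fin ((ω + Cap - 1) / Cap)) (e : Fin n),
          (Finset.univ.filter (fun j => f j = t ∧ lo j ≤ e ∧ e ≤ hi j)).card ≤ Cap) := by
  constructor
  · intro k f hf
    obtain ⟨e0, he0⟩ := hω.1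
    have hωk : ω ≤ k * Cap := by
      rw [he0]
      rw [Finset.card_eq_sum_card_fiberwise
        (f := f) (t := Finset.univ) (fun x _ => Finset.mem_univ _)]
      calc (∑ t : Fin k, ((Finset.univ.filter
            (fun j => lo j ≤ e0 ∧ e0 ≤ hi j)).filter (fun j => f j = t)).card)
          ≤ ∑ _t : Fin k, Cap := by
            refine Finset.sum_le_sum (fun t _ => ?_)
            rw [Finset.filter_filter]
            calc _ = (Finset.univ.filter
                (fun j => f j = t ∧ lo j ≤ e0 ∧ e0 ≤ hi j)).card := by
                  congr 1; ext j; simp only [Finset.mem_filter]; tauto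
            _ ≤ Cap := hf t e0
        _ = k * Cap := by simp [mul_comm]
    have hdiv : (ω + Cap - 1) / Cap ≤ k := by
      rw [Nat.div_le_iff_le_mul_add_pred hCap, mul_comm]
      omega
    exact Nat.mul_le_mul_right CLen hdiv
  · rcases Nat.eq_zero_or_pos m with rfl | hm
    · refine ⟨fun j => j.elim0, fun t e => ?_⟩
      simp
    · have hω1 : 1 ≤ ω := by
        have hmem : (Finset.univ.filter (fun j => lo j ≤ lo ⟨0, hm⟩ ∧
            lo ⟨0, hm⟩ ≤ hi j)).Nonempty :=
          ⟨⟨0, hm⟩, by simp [hlh ⟨0, hm⟩]⟩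
        have h1 := hω.2 ⟨lo ⟨0, hm⟩, rfl⟩
        have h2 := Finset.card_pos.mpr hmem
        omega
      have hK : 0 < (ω + Cap - 1) / Cap := Nat.div_pos (by omega) hCap
      have hωK : ω ≤ ((ω + Cap - 1) / Cap) * Cap := by
        have h := (Nat.div_le_iff_le_mul_add_pred hCap
          (a := ω + Cap - 1) (c := (ω + Cap - 1) / Cap)).mp le_rfl
        rw [mul_comm] at h
        omega
      have hbound : ∀ e : Fin n,
          (Finset.univ.filter (fun j => lo j ≤ e ∧ e ≤ hi j)).card
            ≤ ((ω + Cap - 1) / Cap) * Cap :=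
        fun e => le_trans (hω.2 ⟨e, rfl⟩) hωK
      exact tram_aux n m ((ω + Cap - 1) / Cap) Cap hCap hK lo hi hlh hbound Finset.univ
end

section
/- For the SIR online algorithm on a circuit of length |C| with capacity Cap, SIR is Cap·|C|-competitive with respect to total tour length: for every request sequence σ, SIR(σ) ≤ Cap·|C|·OPT(σ). -/
/-- **SIR is `Cap * |C|`-competitive w.r.t. total tour length.**
On a circuit with `N` unit-length edges (so `|C| = N`), consider any nonempty
sequence of `m` unit requests, request `j` being the subpath of edges
`[lo j, hi j]`.  SIR performs at most one full subtour of length `N` per unit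
request, so `SIR(σ) ≤ m * N`.  `OPT` is the least total tour length of a feasible
offline schedule (an assignment of the requests to `k` full traversal-subtours
such that on every edge each subtour carries at most `Cap` requests, the cost
being `k * N`).  Then `SIR(σ) ≤ Cap * N * OPT(σ)`. -/
theorem SIR_competitive_circuit
    (N m Cap : ℕ) (hN : 0 < N) (hCap : 0 < Cap) (hm : 0 < m)
    (lo hi : Fin m → Fin N) (hlh : ∀ j, lo j ≤ hi j)
    (SIR OPT : ℕ)
    (hSIR : SIR ≤ m * N)
    (hOPT : IsLeast {c : ℕ | ∃ (k : ℕ) (f : Fin m → Fin k),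
        (∀ (s : Fin k) (e : Fin N),
          (Finset.univ.filter (fun j => f j = s ∧ lo j ≤ e ∧ e ≤ hi j)).card ≤ Cap) ∧
        c = k * N} OPT) :
    SIR ≤ Cap * N * OPT := by
  obtain ⟨⟨k, f, hfeas, hc⟩, -⟩ := hOPT
  -- m ≤ k * N * Cap
  have hfiber : ∀ s : Fin k,
      (Finset.univ.filter (fun j => f j = s)).card ≤ N * Cap := by
    intro s
    have hsub : (Finset.univ.filter (fun j => f j = s)) ⊆
        Finset.univ.biUnion (fun e : Fin N =>
          Finset.univ.filter (fun j => f j = s ∧ lo j ≤ e ∧ e ≤ hi j)) := by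
      intro j hj
      simp only [Finset.mem_filter, Finset.mem_univ, true_and] at hj
      refine Finset.mem_biUnion.2 ⟨lo j, Finset.mem_univ _, ?_⟩
      simp [hj, hlh j]
    calc (Finset.univ.filter (fun j => f j = s)).card
        ≤ (Finset.univ.biUnion (fun e : Fin N =>
            Finset.univ.filter (fun j => f j = s ∧ lo j ≤ e ∧ e ≤ hi j))).card :=
          Finset.card_le_card hsub
      _ ≤ ∑ e : Fin N, (Finset.univ.filter
            (fun j => f j = s ∧ lo j ≤ e ∧ e ≤ hi j)).card :=
          Finset.card_biUnion_le
      _ ≤ ∑ _e : Fin N, Cap := Finset.sum_le_sum (fun e _ => hfeas s e)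
      _ = N * Cap := by simp [mul_comm]
  have hm' : m ≤ k * (N * Cap) := by
    have := Finset.card_eq_sum_card_fiberwise
      (fun j (_ : j ∈ (Finset.univ : Finset (Fin m))) => Finset.mem_univ (f j))
    calc m = (Finset.univ : Finset (Fin m)).card := by simp
      _ = ∑ s : Fin k, (Finset.univ.filter (fun j => f j = s)).card := this
      _ ≤ ∑ _s : Fin k, N * Cap := Finset.sum_le_sum (fun s _ => hfiber s)
      _ = k * (N * Cap) := by simp [mul_comm]
  calc SIR ≤ m * N := hSIR
    _ ≤ (k * (N * Cap)) * N := Nat.mul_le_mul_right _ hm'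
    _ = Cap * N * (k * N) := by ring
    _ = Cap * N * OPT := by rw [hc]
end

section
/- The algorithm SIF_M (wait at the parking until Cap passengers are present, then perform a full subtour) is 1-competitive (optimal) w.r.t. total tour length in the morning scenario: if the number of unit requests m is a multiple of Cap (and in general using ⌈m/Cap⌉ subtours with the last possibly partial), SIF_M(σ) = ⌈m/Cap⌉·|C| = OPT(σ). -/
lemma fiber_card_le (m Cap k0 : ℕ) (hCap : 0 < Cap) (g : Fin m → ℕ)
    (hg : ∀ j, g j = (j : ℕ) / Cap) (s : ℕ) :
    (Finset.univ.filter (fun j : Fin m => g j = s)).card ≤ Cap := by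
  have h : ((Finset.univ.filter (fun j : Fin m => g j = s)).image Fin.val)
      ⊆ Finset.Ico (s * Cap) (s * Cap + Cap) := by
    intro x hx
    simp only [Finset.mem_image, Finset.mem_filter] at hx
    obtain ⟨j, ⟨_, hj⟩, rfl⟩ := hx
    rw [hg] at hj
    have h1 : s * Cap ≤ (j : ℕ) := by
      rw [← hj]; exact Nat.div_mul_le_self _ _
    have h2 : (j : ℕ) < s * Cap + Cap := by
      have := (Nat.div_lt_iff_lt_mul hCap).mp (Nat.lt_succ_self ((j : ℕ) / Cap))
      rw [hj] at this; nlinarith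
    exact Finset.mem_Ico.mpr ⟨h1, h2⟩
  calc (Finset.univ.filter (fun j : Fin m => g j = s)).card
      = ((Finset.univ.filter (fun j : Fin m => g j = s)).image Fin.val).card := by
        rw [Finset.card_image_of_injective _ Fin.val_injective]
    _ ≤ (Finset.Ico (s * Cap) (s * Cap + Cap)).card := Finset.card_le_card h
    _ = Cap := by simp

/-- **`SIF_M` is 1-competitive (optimal) in the morning scenario.**
On a circuit with `N` unit edges cut open at the parking `v₀`, all `m` unit
requests start at `v₀` (`lo j = 0`).  `SIF_M` waits at the parking until `Cap`
passengers are present (the last subtour possibly partial) and performs exactly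
`⌈m/Cap⌉` full subtours, so `SIF_M(σ) = ⌈m/Cap⌉ * N`.  This value is the least
total tour length of any feasible offline schedule, i.e.
`SIF_M(σ) = OPT(σ)`. -/
theorem SIFM_optimal_morning
    (N m Cap : ℕ) (hN : 0 < N) (hCap : 0 < Cap)
    (lo hi : Fin m → Fin N) (hlh : ∀ j, lo j ≤ hi j)
    (hmorning : ∀ j, lo j = ⟨0, hN⟩)
    (SIFM : ℕ)
    (hSIFM : SIFM = ((m + Cap - 1) / Cap) * N) :
    IsLeast {c : ℕ | ∃ (k : ℕ) (f : Fin m → Fin k),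
        (∀ (s : Fin k) (e : Fin N),
          (Finset.univ.filter (fun j => f j = s ∧ lo j ≤ e ∧ e ≤ hi j)).card ≤ Cap) ∧
        c = k * N} SIFM ∧
    SIFM = sInf {c : ℕ | ∃ (k : ℕ) (f : Fin m → Fin k),
        (∀ (s : Fin k) (e : Fin N),
          (Finset.univ.filter (fun j => f j = s ∧ lo j ≤ e ∧ e ≤ hi j)).card ≤ Cap) ∧
        c = k * N} := by
  set k0 := (m + Cap - 1) / Cap with hk0
  have hleast : IsLeast {c : ℕ | ∃ (k : ℕ) (f : Fin m → Fin k),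
        (∀ (s : Fin k) (e : Fin N),
          (Finset.univ.filter (fun j => f j = s ∧ lo j ≤ e ∧ e ≤ hi j)).card ≤ Cap) ∧
        c = k * N} SIFM := by
    constructor
    · -- membership: schedule f j = j / Cap
      have hfin : ∀ j : Fin m, (j : ℕ) / Cap < k0 := by
        intro j
        have hm : 0 < m := j.pos
        have hd : (j : ℕ) / Cap ≤ (m - 1) / Cap :=
          Nat.div_le_div_right (by omega)
        have : m + Cap - 1 = (m - 1) + Cap := by omega
        rw [hk0, this, Nat.add_div_right _ hCap]
        omega
      refine ⟨k0, fun j => ⟨(j : ℕ) / Cap, hfin j⟩, ?_, hSIFM⟩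
      intro s e
      have hsub : (Finset.univ.filter (fun j : Fin m =>
            (⟨(j : ℕ) / Cap, hfin j⟩ : Fin k0) = s ∧ lo j ≤ e ∧ e ≤ hi j))
          ⊆ Finset.univ.filter (fun j : Fin m => (j : ℕ) / Cap = (s : ℕ)) := by
        intro j hj
        simp only [Finset.mem_filter] at hj ⊢
        exact ⟨Finset.mem_univ j, congrArg Fin.val hj.2.1⟩
      calc _ ≤ (Finset.univ.filter (fun j : Fin m => (j : ℕ) / Cap = (s : ℕ))).card :=
            Finset.card_le_card hsub
        _ ≤ Cap := fiber_card_le m Cap k0 hCap _ (fun _ => rfl) _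
    · -- lower bound
      rintro c ⟨k, f, hfeas, rfl⟩
      have hsum : m ≤ k * Cap := by
        have hcard : (Finset.univ : Finset (Fin m)).card =
            ∑ s : Fin k, (Finset.univ.filter (fun j => f j = s)).card := by
          exact Finset.card_eq_sum_card_fiberwise (fun j _ => Finset.mem_univ (f j))
        have hle : ∀ s : Fin k,
            (Finset.univ.filter (fun j => f j = s)).card ≤ Cap := by
          intro s
          have := hfeas s ⟨0, hN⟩
          have heq : (Finset.univ.filter (fun j => f j = s ∧ lo j ≤ (⟨0, hN⟩ : Fin N) ∧
              (⟨0, hN⟩ : Fin N) ≤ hi j)) = Finset.univ.filter (fun j => f j = s) := by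
            apply Finset.filter_congr
            intro j _
            simp only [hmorning j]
            constructor
            · exact fun h => h.1
            · exact fun h => ⟨h, le_refl _, Fin.mk_le_mk.mpr (Nat.zero_le _)⟩
          rw [heq] at this
          exact this
        calc m = (Finset.univ : Finset (Fin m)).card := (Finset.card_fin m).symm
          _ = ∑ s : Fin k, (Finset.univ.filter (fun j => f j = s)).card := hcard
          _ ≤ ∑ _s : Fin k, Cap := Finset.sum_le_sum (fun s _ => hle s)
          _ = k * Cap := by simp [Finset.sum_const, mul_comm]
      have hk : k0 ≤ k := by
        rw [hk0, Nat.div_le_iff_le_mul_add_pred hCap]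
        have : k * Cap = Cap * k := mul_comm _ _
        omega
      rw [hSIFM]
      exact Nat.mul_le_mul_right N hk
  exact ⟨hleast, (hleast.csInf_eq).symm⟩
end

section
/- The ceiling inequality underlying the ⌈ω/Cap⌉ bound: for natural numbers ω, Cap ≥ 1, if a multiset of unit requests has maximum edge load ω and is partitioned into k groups each with maximum edge load at most Cap, then k ≥ ⌈ω/Cap⌉; conversely, by coloring the corresponding interval graph with ω colors and bundling colors into groups of Cap, a partition into exactly ⌈ω/Cap⌉ groups each of maximum edge load at most Cap exists. -/
/-!
At an edge of maximum load `ω` the `k` groups carry at most `k * Cap` requests, so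
`ω ≤ k * Cap`. Conversely, intervals on a line with load at most `ω` can be coloured greedily
with `ω` colours, adding them by increasing left endpoint: a new interval meets only intervals
through its left endpoint, fewer than `ω` of them. Colour `c` is then sent to group `c / Cap`;
at any edge the requests of one group have distinct colours in a block of `Cap` consecutive ones.
-/

open Finset

theorem exists_coloring_of_load_le {ι α : Type*} [Fintype ι] [LinearOrder α]
    (lo hi : ι → α) (hlh : ∀ j, lo j ≤ hi j) {ω : ℕ}
    (hload : ∀ e, #{j | lo j ≤ e ∧ e ≤ hi j} ≤ ω) :
    ∃ c : ι → Fin ω, ∀ i j e, i ≠ j →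
      lo i ≤ e ∧ e ≤ hi i → lo j ≤ e ∧ e ≤ hi j → c i ≠ c j := by
  classical
  rcases isEmpty_or_nonempty ι with _ | ⟨⟨j₀⟩⟩
  · exact ⟨isEmptyElim, fun i => isEmptyElim i⟩
  have : NeZero ω := ⟨(card_pos.2 ⟨j₀, by simp [hlh j₀]⟩).trans_le (hload (lo j₀)) |>.ne'⟩
  suffices ∀ s : Finset ι, ∃ c : ι → Fin ω, ∀ i ∈ s, ∀ j ∈ s, ∀ e, i ≠ j →
      lo i ≤ e ∧ e ≤ hi i → lo j ≤ e ∧ e ≤ hi j → c i ≠ c j by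
    obtain ⟨c, hc⟩ := this univ
    exact ⟨c, fun i j => hc i (mem_univ i) j (mem_univ j)⟩
  intro s
  induction s using Finset.induction_on_max_value lo with
  | empty => exact ⟨fun _ => 0, by simp⟩
  | insert a s has hmax ih =>
    obtain ⟨c, hc⟩ := ih
    -- every interval of `s` meeting the new interval `a` contains its left endpoint `lo a`
    set T := {j ∈ s | lo a ≤ hi j}
    have hT : #T < ω := by
      have : insert a T ⊆ univ.filter fun j => lo j ≤ lo a ∧ lo a ≤ hi j := by
        intro j hj
        rcases mem_insert.1 hj with rfl | hj
        · simp [hlh j]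
        · simp only [T, mem_filter] at hj
          simpa using ⟨hmax j hj.1, hj.2⟩
      have := (card_le_card this).trans (hload (lo a))
      rwa [card_insert_of_notMem (fun h => has (mem_filter.1 h).1)] at this
    obtain ⟨x, -, hx⟩ := exists_mem_notMem_of_card_lt_card (s := T.image c) (t := univ)
      (by simpa using card_image_le.trans_lt hT)
    have hxa : ∀ j ∈ s, ∀ e, lo j ≤ e ∧ e ≤ hi j → lo a ≤ e ∧ e ≤ hi a → c j ≠ x :=
      fun j hj e hje hae hjx => hx (mem_image.2 ⟨j, mem_filter.2 ⟨hj, hae.1.trans hje.2⟩, hjx⟩)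
    refine ⟨Function.update c a x, ?_⟩
    have hs : ∀ j ∈ s, j ≠ a := fun j hj h => has (h ▸ hj)
    intro i hi' j hj' e hij hie hje
    rcases mem_insert.1 hi' with rfl | hi <;> rcases mem_insert.1 hj' with rfl | hj
    · exact absurd rfl hij
    · simpa [hs j hj] using (hxa j hj e hje hie).symm
    · simpa [hs i hi] using hxa i hi e hie hje
    · simpa [hs i hi, hs j hj] using hc i hi j hj e hij hie hje

theorem Finset.card_filter_le_card_mul {ι κ : Type*} [Fintype ι] [Fintype κ] [DecidableEq κ]
    (f : ι → κ) (p : ι → Prop) [DecidablePred p] {n : ℕ}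
    (hfiber : ∀ t, #{j | f j = t ∧ p j} ≤ n) : #{j | p j} ≤ n * Fintype.card κ := by
  refine card_le_mul_card_image_of_maps_to (fun j _ => mem_univ (f j)) n fun t _ => ?_
  simpa only [filter_filter, and_comm] using hfiber t

theorem Finset.card_le_of_injOn_div_eq {ι : Type*} {s : Finset ι} {c : ι → ℕ}
    (hc : Set.InjOn c s) {n t : ℕ} (hn : 0 < n) (hdiv : ∀ j ∈ s, c j / n = t) : #s ≤ n := by
  have hmaps : ∀ j ∈ s, c j ∈ Ico (t * n) (t * n + n) := fun j hj => by
    have := (Nat.div_eq_iff hn).1 (hdiv j hj)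
    rw [mem_Ico]
    omega
  simpa using card_le_card_of_injOn c hmaps hc

theorem Nat.add_sub_one_div_le_iff {a b c : ℕ} (hb : 0 < b) : (a + b - 1) / b ≤ c ↔ a ≤ b * c :=
  ceilDiv_le_iff_le_mul hb

/-- **The `⌈ω/Cap⌉` bound for grouping unit requests.**
Unit requests are intervals `[lo j, hi j]` of edges of a path with `n` edges;
the edge load at `e` of a group is the number of its requests containing `e`,
and `ω` is the maximum edge load of the whole multiset (with `IsGreatest`
witnessing it).  If the requests are partitioned into `k` groups
(`f : Fin m → Fin k`) each having maximum edge load at most `Cap`, then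
`k ≥ ⌈ω/Cap⌉`.  Conversely (by coloring the interval graph with `ω` colors and
bundling `Cap` color classes per group) there is a partition into exactly
`⌈ω/Cap⌉` groups each of maximum edge load at most `Cap`. -/
theorem ceil_load_partition_bound
    (n m Cap : ℕ) (hCap : 0 < Cap)
    (lo hi : Fin m → Fin n) (hlh : ∀ j, lo j ≤ hi j)
    (ω : ℕ)
    (hω : IsGreatest {w : ℕ | ∃ e : Fin n,
        w = (Finset.univ.filter (fun j => lo j ≤ e ∧ e ≤ hi j)).card} ω) :
    (∀ (k : ℕ) (f : Fin m → Fin k),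
        (∀ (t : Fin k) (e : Fin n),
          (Finset.univ.filter (fun j => f j = t ∧ lo j ≤ e ∧ e ≤ hi j)).card ≤ Cap) →
        (ω + Cap - 1) / Cap ≤ k) ∧
    (∃ f : Fin m → Fin ((ω + Cap - 1) / Cap),
        ∀ (t : Fin ((ω + Cap - 1) / Cap)) (e : Fin n),
          (Finset.univ.filter (fun j => f j = t ∧ lo j ≤ e ∧ e ≤ hi j)).card ≤ Cap) := by
  obtain ⟨⟨e₀, hωe₀⟩, hload⟩ := hω
  refine ⟨fun k f hf => ?_, ?_⟩
  · rw [Nat.add_sub_one_div_le_iff hCap, hωe₀]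
    simpa using card_filter_le_card_mul f _ fun t => hf t e₀
  · obtain ⟨c, hc⟩ := exists_coloring_of_load_le lo hi hlh fun e => hload ⟨e, rfl⟩
    have hgroup : ∀ j, (c j : ℕ) / Cap < (ω + Cap - 1) / Cap := fun j =>
      (Nat.div_lt_iff_lt_mul hCap).2 <| (c j).2.trans_le <| by
        rw [mul_comm, ← Nat.add_sub_one_div_le_iff hCap]
    refine ⟨fun j => ⟨c j / Cap, hgroup j⟩, fun t e => card_le_of_injOn_div_eq ?_ hCap
      fun j hj => congrArg Fin.val (mem_filter.1 hj).2.1⟩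
    intro i hi j hj hij
    by_contra hne
    simp only [coe_filter, Set.mem_ofPred_eq, mem_univ, true_and] at hi hj
    exact hc i j e hne hi.2 hj.2 (Fin.ext hij)
end
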